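/- arXiv:0807.4275 — 2 statements merged into one kernel-verified Lean document; each statement's English description precedes it below -/
import Mathlib

section
/- Let u : ℝ → ℝ be a non-constant, twice differentiable function such that u, u' and u'' are bounded, and assume |u'| attains its maximal value, i.e. there exists t₀ ∈ ℝ with |u'(t₀)| = sup_{t∈ℝ} |u'(t)|. Then sup_{t∈ℝ} u''(t) ≥ (sup_{t∈ℝ} |u'(t)|)² / (2 · (sup u − inf u)). -/
/-!
If `u'' ≤ S` then `t ↦ S / 2 * (t - t₀) ^ 2 - u t` is convex, so it lies above its tangent at `t₀`:
`u (t₀ + h) ≤ u t₀ + u' t₀ * h + S / 2 * h ^ 2` for every `h`. Since `u` takes values in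
`[inf u, sup u]`, the quadratic `S / 2 * h ^ 2 + u' t₀ * h + osc u` is nonnegative, hence has
nonpositive discriminant: `u' t₀ ^ 2 ≤ 2 * S * osc u`. At a point where `|u'|` is maximal this is
the claim.
-/

open Set

lemma ConvexOn.add_mul_sub_le_of_hasDerivAt {s : Set ℝ} {f : ℝ → ℝ} {f' x y : ℝ}
    (hf : ConvexOn ℝ s f) (hx : x ∈ s) (hy : y ∈ s) (hf' : HasDerivAt f f' x) :
    f x + f' * (y - x) ≤ f y := by
  rcases lt_trichotomy x y with hxy | rfl | hyx
  · have := hf.le_slope_of_hasDerivAt hx hy hxy hf'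
    rw [slope_def_field, le_div_iff₀ (sub_pos.mpr hxy)] at this
    linarith
  · simp
  · have := hf.slope_le_of_hasDerivAt hy hx hyx hf'
    rw [slope_def_field, div_le_iff₀ (sub_pos.mpr hyx)] at this
    linarith

lemma le_add_deriv_mul_add_sq_of_deriv2_le {u : ℝ → ℝ} {S : ℝ} (hu : Differentiable ℝ u)
    (hu' : Differentiable ℝ (deriv u)) (hS : ∀ t, deriv (deriv u) t ≤ S) (x y : ℝ) :
    u y ≤ u x + deriv u x * (y - x) + S / 2 * (y - x) ^ 2 := by
  have hφ' (t : ℝ) :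
      HasDerivAt (fun t ↦ S / 2 * (t - x) ^ 2 - u t) (S * (t - x) - deriv u t) t := by
    refine ((((hasDerivAt_id' t).sub_const x).fun_pow 2).const_mul (S / 2)).fun_sub
      (hu t).hasDerivAt |>.congr_deriv ?_
    ring
  have hφ'' (t : ℝ) : HasDerivAt (fun t ↦ S * (t - x) - deriv u t) (S - deriv (deriv u) t) t := by
    refine (((hasDerivAt_id' t).sub_const x).const_mul S).fun_sub (hu' t).hasDerivAt
      |>.congr_deriv ?_
    ring
  have hconvex : ConvexOn ℝ univ (fun t ↦ S / 2 * (t - x) ^ 2 - u t) :=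
    convexOn_of_hasDerivWithinAt2_nonneg convex_univ
      (fun t _ ↦ (hφ' t).continuousAt.continuousWithinAt) (fun t _ ↦ (hφ' t).hasDerivWithinAt)
      (fun t _ ↦ (hφ'' t).hasDerivWithinAt) (fun t _ ↦ sub_nonneg.mpr (hS t))
  have := hconvex.add_mul_sub_le_of_hasDerivAt (mem_univ x) (mem_univ y) (hφ' x)
  simp only [sub_self] at this
  linarith

lemma sq_deriv_le_of_deriv2_le {u : ℝ → ℝ} {S a b : ℝ} (hu : Differentiable ℝ u)
    (hu' : Differentiable ℝ (deriv u)) (hS : ∀ t, deriv (deriv u) t ≤ S)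
    (hab : ∀ t, u t ∈ Icc a b) (t₀ : ℝ) : deriv u t₀ ^ 2 ≤ 2 * S * (b - a) := by
  have hquad (h : ℝ) : 0 ≤ S / 2 * (h * h) + deriv u t₀ * h + (b - a) := by
    have := le_add_deriv_mul_add_sq_of_deriv2_le hu hu' hS t₀ (t₀ + h)
    linarith [(hab t₀).2, (hab (t₀ + h)).1]
  have := discrim_le_zero hquad
  rw [discrim] at this
  linarith

theorem landau_hadamard_general (u : ℝ → ℝ)
    (h_nonconst : ∃ a b : ℝ, u a ≠ u b)
    (h_diff : Differentiable ℝ u) (h_diff2 : Differentiable ℝ (deriv u))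
    (h_bd : ∃ M : ℝ, ∀ t, |u t| ≤ M)
    (h_bd'' : ∃ M : ℝ, ∀ t, |deriv (deriv u) t| ≤ M)
    (h_attain : ∃ t₀ : ℝ, |deriv u t₀| = ⨆ t, |deriv u t|) :
    (⨆ t, deriv (deriv u) t)
      ≥ (⨆ t, |deriv u t|) ^ 2 / (2 * ((⨆ t, u t) - ⨅ t, u t)) := by
  obtain ⟨M, hM⟩ := h_bd
  obtain ⟨M'', hM''⟩ := h_bd''
  obtain ⟨t₀, ht₀⟩ := h_attain
  obtain ⟨a, b, hab⟩ := h_nonconst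
  have hu_above : BddAbove (range u) := ⟨M, forall_mem_range.mpr fun t ↦ (abs_le.mp (hM t)).2⟩
  have hu_below : BddBelow (range u) := ⟨-M, forall_mem_range.mpr fun t ↦ (abs_le.mp (hM t)).1⟩
  have hu_mem (t : ℝ) : u t ∈ Icc (⨅ t, u t) (⨆ t, u t) :=
    ⟨ciInf_le hu_below t, le_ciSup hu_above t⟩
  have hS (t : ℝ) : deriv (deriv u) t ≤ ⨆ t, deriv (deriv u) t :=
    le_ciSup ⟨M'', forall_mem_range.mpr fun t ↦ (abs_le.mp (hM'' t)).2⟩ t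
  have hosc : 0 < 2 * ((⨆ t, u t) - ⨅ t, u t) := by
    by_contra! h
    exact hab (by linarith [(hu_mem a).1, (hu_mem a).2, (hu_mem b).1, (hu_mem b).2])
  rw [ge_iff_le, div_le_iff₀ hosc, ← ht₀, sq_abs]
  linarith [sq_deriv_le_of_deriv2_le h_diff h_diff2 hS hu_mem t₀]

/-- Landau–Hadamard type inequality for a real function of one variable. -/
theorem landau_hadamard (u : ℝ → ℝ)
    (h_nonconst : ∃ a b : ℝ, u a ≠ u b)
    (h_diff : Differentiable ℝ u) (h_diff2 : Differentiable ℝ (deriv u))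
    (h_bd : ∃ M : ℝ, ∀ t, |u t| ≤ M)
    (h_bd' : ∃ M : ℝ, ∀ t, |deriv u t| ≤ M)
    (h_bd'' : ∃ M : ℝ, ∀ t, |deriv (deriv u) t| ≤ M)
    (h_attain : ∃ t₀ : ℝ, |deriv u t₀| = ⨆ t, |deriv u t|) :
    (⨆ t, deriv (deriv u) t)
      ≥ (⨆ t, |deriv u t|) ^ 2 / (2 * ((⨆ t, u t) - ⨅ t, u t)) :=
  landau_hadamard_general u h_nonconst h_diff h_diff2 h_bd h_bd'' h_attain
end

section
/- Let n ≥ 1 and F, G ∈ C^∞_c(ℝ²ⁿ). Let φ_F, φ_G : ℝ × ℝ²ⁿ → ℝ²ⁿ be the Hamiltonian flows of F and G, i.e. φ_H(0,x) = x and ∂_t φ_H(t,x) = sgrad H(φ_H(t,x)) for H = F, G. Then for every x ∈ ℝ²ⁿ: G(x) + F(φ_G(1,x)) − G(φ_F(−1,x)) − F(x) ≤ (max{{F,G},G} + max{{F,G},F}) / 2. -/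
open scoped BigOperators
open Filter

/-- The Poisson bracket on ℝ²ⁿ = (Fin n → ℝ) × (Fin n → ℝ), with first factor the
`p`-coordinates and second factor the `q`-coordinates:
`{F,G} = ∑ i, ∂F/∂qᵢ · ∂G/∂pᵢ − ∂F/∂pᵢ · ∂G/∂qᵢ`. -/
noncomputable def pb (n : ℕ) (F G : ((Fin n → ℝ) × (Fin n → ℝ)) → ℝ) :
    ((Fin n → ℝ) × (Fin n → ℝ)) → ℝ :=
  fun x => ∑ i : Fin n,
    ((fderiv ℝ F x) (0, Pi.single i 1) * (fderiv ℝ G x) (Pi.single i 1, 0)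
      - (fderiv ℝ F x) (Pi.single i 1, 0) * (fderiv ℝ G x) (0, Pi.single i 1))

/-- Smooth compactly supported functions on ℝ²ⁿ. -/
def SmoothCpt (n : ℕ) (F : ((Fin n → ℝ) × (Fin n → ℝ)) → ℝ) : Prop :=
  ContDiff ℝ (⊤ : ℕ∞) F ∧ HasCompactSupport F

/-- max of a function (as a supremum). -/
noncomputable def fmax (n : ℕ) (F : ((Fin n → ℝ) × (Fin n → ℝ)) → ℝ) : ℝ := ⨆ x, F x

/-- min of a function (as an infimum). -/
noncomputable def fmin (n : ℕ) (F : ((Fin n → ℝ) × (Fin n → ℝ)) → ℝ) : ℝ := ⨅ x, F x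

/-- oscillation: max − min. -/
noncomputable def osc (n : ℕ) (F : ((Fin n → ℝ) × (Fin n → ℝ)) → ℝ) : ℝ :=
  fmax n F - fmin n F

/-- the uniform (C⁰) norm. -/
noncomputable def unorm (n : ℕ) (F : ((Fin n → ℝ) × (Fin n → ℝ)) → ℝ) : ℝ := ⨆ x, |F x|

/-- The functional Φ^v(F,G) = v₁·max{{F,G},F} − v₂·min{{F,G},F}
  + v₃·max{{F,G},G} − v₄·min{{F,G},G}. -/
noncomputable def Phi (n : ℕ) (v : Fin 4 → ℝ) (F G : ((Fin n → ℝ) × (Fin n → ℝ)) → ℝ) : ℝ :=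
  v 0 * fmax n (pb n (pb n F G) F) - v 1 * fmin n (pb n (pb n F G) F)
  + v 2 * fmax n (pb n (pb n F G) G) - v 3 * fmin n (pb n (pb n F G) G)

/-- The Hamiltonian vector field sgrad H = (−∂H/∂q, ∂H/∂p). -/
noncomputable def sgrad (n : ℕ) (H : ((Fin n → ℝ) × (Fin n → ℝ)) → ℝ)
    (x : (Fin n → ℝ) × (Fin n → ℝ)) : (Fin n → ℝ) × (Fin n → ℝ) :=
  (fun i => -((fderiv ℝ H x) (0, Pi.single i 1)),
   fun i => (fderiv ℝ H x) (Pi.single i 1, 0))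

lemma clm_apply_pair (n : ℕ) (L : ((Fin n → ℝ) × (Fin n → ℝ)) →L[ℝ] ℝ)
    (u v : Fin n → ℝ) :
    L (u, v) = ∑ i : Fin n, (u i * L (Pi.single i 1, 0) + v i * L (0, Pi.single i 1)) := by
  have hu : (u, v) = ∑ i : Fin n, (u i • ((Pi.single i 1 : Fin n → ℝ), (0 : Fin n → ℝ))
      + v i • ((0 : Fin n → ℝ), (Pi.single i 1 : Fin n → ℝ))) := by
    apply Prod.ext <;> simp [Prod.fst_sum, Prod.snd_sum, Prod.smul_mk]
    · funext j
      simp [Finset.sum_apply, Pi.single_apply, mul_comm]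
    · funext j
      simp [Finset.sum_apply, Pi.single_apply, mul_comm]
  rw [hu, map_sum]
  congr 1; funext i
  rw [map_add, map_smul, map_smul, smul_eq_mul, smul_eq_mul]

lemma fderiv_sgrad (n : ℕ) (H K : ((Fin n → ℝ) × (Fin n → ℝ)) → ℝ)
    (y : (Fin n → ℝ) × (Fin n → ℝ)) :
    (fderiv ℝ H y) (sgrad n K y) = pb n H K y := by
  rw [sgrad, clm_apply_pair, pb]
  congr 1; funext i; ring

lemma pb_smooth (n : ℕ) (F G : ((Fin n → ℝ) × (Fin n → ℝ)) → ℝ)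
    (hF : ContDiff ℝ (⊤ : ℕ∞) F) (hG : ContDiff ℝ (⊤ : ℕ∞) G) : ContDiff ℝ (⊤ : ℕ∞) (pb n F G) := by
  have hF' : ContDiff ℝ (⊤ : ℕ∞) (fderiv ℝ F) := hF.fderiv_right (by simp)
  have hG' : ContDiff ℝ (⊤ : ℕ∞) (fderiv ℝ G) := hG.fderiv_right (by simp)
  apply ContDiff.sum
  intro i _
  exact ((hF'.clm_apply contDiff_const).mul (hG'.clm_apply contDiff_const)).sub
    ((hF'.clm_apply contDiff_const).mul (hG'.clm_apply contDiff_const))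

lemma pb_compactSupport (n : ℕ) (F G : ((Fin n → ℝ) × (Fin n → ℝ)) → ℝ)
    (hF : HasCompactSupport F) : HasCompactSupport (pb n F G) := by
  have h1 : HasCompactSupport (fderiv ℝ F) := hF.fderiv ℝ
  apply h1.mono'
  intro x hx
  apply subset_closure
  intro h0
  apply hx
  simp only [pb, Function.mem_support] at *
  simp [h0]

lemma le_fmax (n : ℕ) (f : ((Fin n → ℝ) × (Fin n → ℝ)) → ℝ)
    (hf : Continuous f) (hc : HasCompactSupport f) (x : (Fin n → ℝ) × (Fin n → ℝ)) :
    f x ≤ fmax n f := by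
  obtain ⟨y, hy⟩ := hf.exists_forall_ge_of_hasCompactSupport hc
  exact le_ciSup ⟨f y, Set.forall_mem_range.2 hy⟩ x

lemma flow_deriv (n : ℕ) (H K : ((Fin n → ℝ) × (Fin n → ℝ)) → ℝ)
    (hH : ContDiff ℝ (⊤ : ℕ∞) H)
    (φ : ℝ → ((Fin n → ℝ) × (Fin n → ℝ)) → ((Fin n → ℝ) × (Fin n → ℝ)))
    (hφ : ∀ t x, HasDerivAt (fun s => φ s x) (sgrad n K (φ t x)) t)
    (t : ℝ) (x : (Fin n → ℝ) × (Fin n → ℝ)) :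
    HasDerivAt (fun s => H (φ s x)) (pb n H K (φ t x)) t := by
  have h1 : HasFDerivAt H (fderiv ℝ H (φ t x)) (φ t x) :=
    (hH.differentiable (by simp) (φ t x)).hasFDerivAt
  have h2 := h1.comp_hasDerivAt t (hφ t x)
  rw [fderiv_sgrad] at h2
  exact h2

lemma flow_deriv_neg (n : ℕ) (H K : ((Fin n → ℝ) × (Fin n → ℝ)) → ℝ)
    (hH : ContDiff ℝ (⊤ : ℕ∞) H)
    (φ : ℝ → ((Fin n → ℝ) × (Fin n → ℝ)) → ((Fin n → ℝ) × (Fin n → ℝ)))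
    (hφ : ∀ t x, HasDerivAt (fun s => φ s x) (sgrad n K (φ t x)) t)
    (t : ℝ) (x : (Fin n → ℝ) × (Fin n → ℝ)) :
    HasDerivAt (fun s => H (φ (-s) x)) (-(pb n H K (φ (-t) x))) t := by
  have h1 := flow_deriv n H K hH φ hφ (-t) x
  have h2 := h1.comp t (hasDerivAt_neg t)
  simpa [mul_comm, Function.comp_def] using h2

lemma nonpos_of_deriv (f f' : ℝ → ℝ) (hd : ∀ t, HasDerivAt f (f' t) t)
    (h0 : f 0 = 0) (hle : ∀ t ∈ Set.Icc (0:ℝ) 1, f' t ≤ 0) :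
    ∀ t ∈ Set.Icc (0:ℝ) 1, f t ≤ 0 := by
  have hanti : AntitoneOn f (Set.Icc 0 1) := by
    apply antitoneOn_of_deriv_nonpos (convex_Icc 0 1)
    · exact (Differentiable.continuous fun y => (hd y).differentiableAt).continuousOn
    · exact fun y _ => ((hd y).differentiableAt).differentiableWithinAt
    · intro y hy
      rw [(hd y).deriv]
      exact hle y (interior_subset hy)
  intro t ht
  have := hanti (Set.left_mem_Icc.2 zero_le_one) ht ht.1
  simpa [h0] using this

lemma pb_antisymm (n : ℕ) (F G : ((Fin n → ℝ) × (Fin n → ℝ)) → ℝ)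
    (y : (Fin n → ℝ) × (Fin n → ℝ)) : pb n G F y = -(pb n F G y) := by
  rw [pb, pb, ← Finset.sum_neg_distrib]
  congr 1; funext i; ring

/-- key Hamiltonian estimate (Lemma 3.2 / `Y` estimate). -/
theorem hamiltonian_flow_estimate (n : ℕ) (hn : 1 ≤ n)
    (F G : ((Fin n → ℝ) × (Fin n → ℝ)) → ℝ)
    (hF : SmoothCpt n F) (hG : SmoothCpt n G)
    (φF φG : ℝ → ((Fin n → ℝ) × (Fin n → ℝ)) → ((Fin n → ℝ) × (Fin n → ℝ)))
    (hφF0 : ∀ x, φF 0 x = x) (hφG0 : ∀ x, φG 0 x = x)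
    (hφF : ∀ t x, HasDerivAt (fun s => φF s x) (sgrad n F (φF t x)) t)
    (hφG : ∀ t x, HasDerivAt (fun s => φG s x) (sgrad n G (φG t x)) t)
    (x : (Fin n → ℝ) × (Fin n → ℝ)) :
    G x + F (φG 1 x) - G (φF (-1) x) - F x
      ≤ (fmax n (pb n (pb n F G) G) + fmax n (pb n (pb n F G) F)) / 2 := by
  set H : ((Fin n → ℝ) × (Fin n → ℝ)) → ℝ := pb n F G with hH
  have hHs : ContDiff ℝ (⊤ : ℕ∞) H := pb_smooth n F G hF.1 hG.1
  have hHc : HasCompactSupport H := pb_compactSupport n F G hF.2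
  set MG : ℝ := fmax n (pb n H G) with hMGdef
  set MF : ℝ := fmax n (pb n H F) with hMFdef
  have hMG : ∀ y, pb n H G y ≤ MG := fun y =>
    le_fmax n _ ((pb_smooth n H G hHs hG.1).continuous) (pb_compactSupport n H G hHc) y
  have hMF : ∀ y, pb n H F y ≤ MF := fun y =>
    le_fmax n _ ((pb_smooth n H F hHs hF.1).continuous) (pb_compactSupport n H F hHc) y
  set c : ℝ := H x with hc
  -- Step A : H (φG t x) ≤ c + t * MG on [0,1]
  have key1 : ∀ t ∈ Set.Icc (0:ℝ) 1, H (φG t x) - c - t * MG ≤ 0 := by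
    apply nonpos_of_deriv _ (fun t => pb n H G (φG t x) - MG)
    · intro t
      exact ((flow_deriv n H G hHs φG hφG t x).sub_const c).sub (hasDerivAt_mul_const MG)
    · simp [hφG0, hc]
    · intro t _
      have := hMG (φG t x); linarith
  -- Step B : F (φG 1 x) - F x ≤ c + MG / 2
  have key2 : F (φG 1 x) - F x - 1 * c - 1 ^ 2 * (MG / 2) ≤ 0 := by
    refine nonpos_of_deriv (fun t => F (φG t x) - F x - t * c - t ^ 2 * (MG / 2))
      (fun t => H (φG t x) - c - t * MG) ?_ ?_ ?_ 1
      (Set.right_mem_Icc.2 zero_le_one)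
    · intro t
      have h := (((flow_deriv n F G hF.1 φG hφG t x).sub_const (F x)).sub
        (hasDerivAt_mul_const c)).sub ((hasDerivAt_pow 2 t).mul_const (MG / 2))
      refine h.congr_deriv ?_
      simp only [← hH]
      norm_num
      ring
    · simp [hφG0]
    · exact fun t ht => key1 t ht
  -- Step C : H (φF (-t) x) ≥ c - t * MF on [0,1]
  have key3 : ∀ t ∈ Set.Icc (0:ℝ) 1, c - t * MF - H (φF (-t) x) ≤ 0 := by
    apply nonpos_of_deriv _ (fun t => pb n H F (φF (-t) x) - MF)
    · intro t
      have h := ((hasDerivAt_const t c).sub (hasDerivAt_mul_const MF)).sub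
        (flow_deriv_neg n H F hHs φF hφF t x)
      refine h.congr_deriv ?_
      ring
    · simp [hφF0, hc]
    · intro t _
      have := hMF (φF (-t) x); linarith
  -- Step D : G x - G (φF (-1) x) ≤ -c + MF / 2
  have key4 : G x - G (φF (-1) x) + 1 * c - 1 ^ 2 * (MF / 2) ≤ 0 := by
    refine nonpos_of_deriv (fun t => G x - G (φF (-t) x) + t * c - t ^ 2 * (MF / 2))
      (fun t => c - t * MF - H (φF (-t) x)) ?_ ?_ ?_ 1
      (Set.right_mem_Icc.2 zero_le_one)
    · intro t
      have h := (((hasDerivAt_const t (G x)).sub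
        (flow_deriv_neg n G F hG.1 φF hφF t x)).add (hasDerivAt_mul_const c)).sub
        ((hasDerivAt_pow 2 t).mul_const (MF / 2))
      refine h.congr_deriv ?_
      rw [pb_antisymm n F G, ← hH]
      norm_num
      ring
    · simp [hφF0]
    · exact fun t ht => key3 t ht
  have h2 := key2
  have h4 := key4
  norm_num at h2 h4
  linarith
end
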